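/- arXiv:2308.08332 — 10 statements merged into one kernel-verified Lean document; each statement's English description precedes it below -/
import Mathlib

section
/- Suppose S, E, I_1, …, I_N : ℝ → ℝ are differentiable, satisfy the SEIR system with N parallel infectious stages for all t ≥ t₀, and S(t), E(t), I_i(t) ≥ 0 for all t ≥ t₀. If 0 < S(t₀) < S̄, then λ₁(S(t₀)) < 0 and there exists a constant C > 0 such that for all t ≥ t₀ one has √(E(t)² + Σ_{i=1}^N I_i(t)²) ≤ C · exp(λ₁(S(t₀)) · (t − t₀)); in particular E(t) and every I_i(t) tend to 0 exponentially fast as t → ∞ (the non-outbreak condition). -/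
open Filter

/-!
With `λ = λ₁(S(t₀))` and `b = Σ βᵢ xᵢ`, the vector `(p, 1)` with `p = (λ + γ) / S(t₀)` is a left
eigenvector, for the eigenvalue `λ`, of the matrix `[[-σ, S(t₀)], [σ b, -γ]]` that bounds the
dynamics of `(E, Σ βᵢ Iᵢ)`: `S` is nonincreasing and `γᵢ ≥ γ`. Hence `W = p E + Σ βᵢ Iᵢ` satisfies
`W' ≤ λ W`, Grönwall gives `W(t) ≤ W(t₀) e^{λ (t - t₀)}`, and the nonnegative combination `W`
dominates the Euclidean norm of `(E, I₁, …, I_N)`. Finally `λ < 0` exactly when `b S(t₀) < γ`.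
-/

open Real Finset

theorem le_mul_exp_of_hasDerivAt_le {f f' : ℝ → ℝ} {a L : ℝ}
    (hf : ∀ t ≥ a, HasDerivAt f (f' t) t) (hbound : ∀ t ≥ a, f' t ≤ L * f t)
    {t : ℝ} (ht : a ≤ t) : f t ≤ f a * exp (L * (t - a)) := by
  have key := le_gronwallBound_of_liminf_deriv_right_le (f' := f') (δ := f a) (K := L) (ε := 0)
    (b := t) (fun s hs => (hf s hs.1).continuousAt.continuousWithinAt)
    (fun s hs r hr => by
      simpa only [slope_def_module, smul_eq_mul] using
        (hf s hs.1).hasDerivWithinAt.liminf_right_slope_le hr)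
    le_rfl (fun s hs => by simpa using hbound s hs.1) t ⟨ht, le_rfl⟩
  rwa [gronwallBound_ε0] at key

theorem tendsto_zero_of_abs_le_mul_exp {f : ℝ → ℝ} {C L a : ℝ} (hL : L < 0)
    (hf : ∀ t ≥ a, |f t| ≤ C * exp (L * (t - a))) : Tendsto f atTop (nhds 0) := by
  refine squeeze_zero_norm' (eventually_atTop.2 ⟨a, hf⟩) ?_
  have hexp : Tendsto (fun t => exp (L * (t - a))) atTop (nhds 0) :=
    tendsto_exp_atBot.comp <| (tendsto_const_mul_atBot_of_neg hL).2 <|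
      tendsto_atTop_add_const_right atTop (-a) tendsto_id
  simpa using hexp.const_mul C

theorem sqrt_sq_add_sum_sq_le {ι : Type*} [Fintype ι] {e p : ℝ} {y w : ι → ℝ}
    (he : 0 ≤ e) (hy : ∀ i, 0 ≤ y i) (hp : 0 < p) (hw : ∀ i, 0 < w i) :
    √(e ^ 2 + ∑ i, y i ^ 2) ≤ (1 / p + ∑ i, 1 / w i) * (p * e + ∑ i, w i * y i) := by
  set W := p * e + ∑ i, w i * y i
  have hwy : ∀ i, 0 ≤ w i * y i := fun i => mul_nonneg (hw i).le (hy i)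
  have hsum : 0 ≤ ∑ i, y i := sum_nonneg fun i _ => hy i
  have hl1 : √(e ^ 2 + ∑ i, y i ^ 2) ≤ e + ∑ i, y i := by
    refine sqrt_le_iff.2 ⟨by positivity, ?_⟩
    nlinarith [sum_sq_le_sq_sum_of_nonneg fun i (_ : i ∈ univ) => hy i]
  have he' : e ≤ 1 / p * W := by
    rw [div_mul_eq_mul_div, le_div_iff₀ hp]
    nlinarith [sum_nonneg fun i (_ : i ∈ univ) => hwy i]
  have hy' : ∀ i, y i ≤ 1 / w i * W := fun i => by
    rw [div_mul_eq_mul_div, le_div_iff₀ (hw i)]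
    have := single_le_sum (fun j (_ : j ∈ univ) => hwy j) (mem_univ i)
    nlinarith [mul_nonneg hp.le he]
  calc √(e ^ 2 + ∑ i, y i ^ 2) ≤ e + ∑ i, y i := hl1
    _ ≤ 1 / p * W + ∑ i, 1 / w i * W := add_le_add he' (sum_le_sum fun i _ => hy' i)
    _ = (1 / p + ∑ i, 1 / w i) * W := by rw [← sum_mul, add_mul]

/-- The larger root of `(λ + σ) (λ + γ) = σ c`. -/
noncomputable def dominantRoot (σ γ c : ℝ) : ℝ :=
  -(σ + γ) / 2 + (1 / 2) * √(4 * σ * c + (γ - σ) ^ 2)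

theorem dominantRoot_add_mul_add {σ γ c : ℝ} (hσc : 0 ≤ σ * c) :
    (dominantRoot σ γ c + σ) * (dominantRoot σ γ c + γ) = σ * c := by
  have hsq := sq_sqrt (show 0 ≤ 4 * σ * c + (γ - σ) ^ 2 by nlinarith [sq_nonneg (γ - σ)])
  unfold dominantRoot
  linear_combination hsq / 4

theorem dominantRoot_neg {σ γ c : ℝ} (hσ : 0 < σ) (hγ : 0 < γ) (hc : c < γ) :
    dominantRoot σ γ c < 0 := by
  have : √(4 * σ * c + (γ - σ) ^ 2) < σ + γ := by
    rw [sqrt_lt' (by positivity)]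
    nlinarith
  unfold dominantRoot
  linarith

theorem dominantRoot_add_pos {σ γ c : ℝ} (hσc : 0 < σ * c) : 0 < dominantRoot σ γ c + γ := by
  have : |γ - σ| < √(4 * σ * c + (γ - σ) ^ 2) := by
    rw [← sqrt_sq_eq_abs]
    exact sqrt_lt_sqrt (sq_nonneg _) (by linarith)
  unfold dominantRoot
  linarith [neg_abs_le (γ - σ)]

theorem exists_left_eigenvector_dominantRoot {σ γ b S₀ : ℝ} (hσ : 0 < σ) (hb : 0 < b)
    (hS₀ : 0 < S₀) :
    ∃ p > 0, p * S₀ = dominantRoot σ γ (b * S₀) + γ ∧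
      σ * b = (dominantRoot σ γ (b * S₀) + σ) * p := by
  have hσc : 0 < σ * (b * S₀) := by positivity
  refine ⟨(dominantRoot σ γ (b * S₀) + γ) / S₀, div_pos (dominantRoot_add_pos hσc) hS₀,
    div_mul_cancel₀ _ hS₀.ne', ?_⟩
  rw [mul_div_assoc', dominantRoot_add_mul_add hσc.le, eq_div_iff hS₀.ne', mul_assoc]

section SEIR

variable {N : ℕ} {σ L p S₀ g t₀ : ℝ} {γ β x : Fin N → ℝ} {S E : ℝ → ℝ} {I : Fin N → ℝ → ℝ}

theorem susceptible_le (hβ : ∀ i, 0 ≤ β i)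
    (hS : ∀ t ≥ t₀, HasDerivAt S (-(∑ i, β i * I i t) * S t) t)
    (hSnn : ∀ t ≥ t₀, 0 ≤ S t) (hInn : ∀ i, ∀ t ≥ t₀, 0 ≤ I i t) {t : ℝ} (ht : t₀ ≤ t) :
    S t ≤ S t₀ := by
  simpa using le_mul_exp_of_hasDerivAt_le (L := 0) hS (fun s hs => by
    simpa [neg_mul] using
      mul_nonneg (sum_nonneg fun i _ => mul_nonneg (hβ i) (hInn i s hs)) (hSnn s hs)) ht

theorem lyapunov_deriv_le {t : ℝ} (hσb : σ * ∑ i, β i * x i = (L + σ) * p)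
    (hpS : p * S₀ = L + g) (hp : 0 ≤ p) (hg : ∀ i, g ≤ γ i) (hβ : ∀ i, 0 ≤ β i)
    (hSt : S t ≤ S₀) (hIt : ∀ i, 0 ≤ I i t) :
    p * ((∑ i, β i * I i t) * S t - σ * E t) + ∑ i, β i * (x i * σ * E t - γ i * I i t)
      ≤ L * (p * E t + ∑ i, β i * I i t) := by
  set J := ∑ i, β i * I i t
  have hJ : 0 ≤ J := sum_nonneg fun i _ => mul_nonneg (hβ i) (hIt i)
  have hsplit : ∑ i, β i * (x i * σ * E t - γ i * I i t)
      = σ * (∑ i, β i * x i) * E t - ∑ i, γ i * (β i * I i t) := by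
    simp only [mul_sub, sum_sub_distrib, mul_sum, sum_mul]
    congr 1 <;> refine sum_congr rfl fun i _ => by ring
  have hremoval : g * J ≤ ∑ i, γ i * (β i * I i t) := by
    rw [mul_sum]
    gcongr with i
    · exact mul_nonneg (hβ i) (hIt i)
    · exact hg i
  have hinfection : p * (J * S t) ≤ p * (J * S₀) := by gcongr
  rw [hsplit, hσb]
  linear_combination hinfection + hremoval + J * hpS

theorem lyapunov_le_mul_exp (hσb : σ * ∑ i, β i * x i = (L + σ) * p)
    (hpS : p * S₀ = L + g) (hp : 0 ≤ p) (hg : ∀ i, g ≤ γ i) (hβ : ∀ i, 0 ≤ β i)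
    (hE : ∀ t ≥ t₀, HasDerivAt E ((∑ i, β i * I i t) * S t - σ * E t) t)
    (hI : ∀ i, ∀ t ≥ t₀, HasDerivAt (I i) (x i * σ * E t - γ i * I i t) t)
    (hSle : ∀ t ≥ t₀, S t ≤ S₀) (hInn : ∀ i, ∀ t ≥ t₀, 0 ≤ I i t) {t : ℝ} (ht : t₀ ≤ t) :
    p * E t + ∑ i, β i * I i t
      ≤ (p * E t₀ + ∑ i, β i * I i t₀) * exp (L * (t - t₀)) :=
  le_mul_exp_of_hasDerivAt_le (f := fun t => p * E t + ∑ i, β i * I i t)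
    (fun s hs => ((hE s hs).const_mul p).add
      (HasDerivAt.fun_sum fun i _ => (hI i s hs).const_mul (β i)))
    (fun s hs => lyapunov_deriv_le hσb hpS hp hg hβ (hSle s hs) fun i => hInn i s hs) ht

theorem exists_sqrt_le_mul_exp (hσb : σ * ∑ i, β i * x i = (L + σ) * p)
    (hpS : p * S₀ = L + g) (hp : 0 < p) (hg : ∀ i, g ≤ γ i) (hβ : ∀ i, 0 < β i)
    (hE : ∀ t ≥ t₀, HasDerivAt E ((∑ i, β i * I i t) * S t - σ * E t) t)
    (hI : ∀ i, ∀ t ≥ t₀, HasDerivAt (I i) (x i * σ * E t - γ i * I i t) t)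
    (hSle : ∀ t ≥ t₀, S t ≤ S₀) (hEnn : ∀ t ≥ t₀, 0 ≤ E t) (hInn : ∀ i, ∀ t ≥ t₀, 0 ≤ I i t) :
    ∃ C > 0, ∀ t ≥ t₀, √(E t ^ 2 + ∑ i, I i t ^ 2) ≤ C * exp (L * (t - t₀)) := by
  set W := fun t => p * E t + ∑ i, β i * I i t
  set K := 1 / p + ∑ i, 1 / β i
  have hK : 0 ≤ K :=
    add_nonneg (one_div_pos.2 hp).le (sum_nonneg fun i _ => (one_div_pos.2 (hβ i)).le)
  have hW₀ : 0 ≤ W t₀ := add_nonneg (mul_nonneg hp.le (hEnn t₀ le_rfl))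
    (sum_nonneg fun i _ => mul_nonneg (hβ i).le (hInn i t₀ le_rfl))
  refine ⟨K * W t₀ + 1, by positivity, fun t ht => ?_⟩
  have hW : W t ≤ W t₀ * exp (L * (t - t₀)) :=
    lyapunov_le_mul_exp hσb hpS hp.le hg (fun i => (hβ i).le) hE hI hSle hInn ht
  calc √(E t ^ 2 + ∑ i, I i t ^ 2) ≤ K * W t :=
        sqrt_sq_add_sum_sq_le (hEnn t ht) (hInn · t ht) hp hβ
    _ ≤ K * (W t₀ * exp (L * (t - t₀))) := mul_le_mul_of_nonneg_left hW hK
    _ ≤ (K * W t₀ + 1) * exp (L * (t - t₀)) := by rw [← mul_assoc]; gcongr; linarith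

end SEIR

theorem stmt_0_general
    (N : ℕ) [NeZero N]
    (σ : ℝ) (hσ : 0 < σ)
    (γ β x : Fin N → ℝ)
    (hβ : ∀ i, 0 < β i) (hx : ∀ i, 0 < x i)
    (S E : ℝ → ℝ) (I : Fin N → ℝ → ℝ) (t₀ : ℝ)
    (hS : ∀ t ≥ t₀, HasDerivAt S (-(∑ i, β i * I i t) * S t) t)
    (hE : ∀ t ≥ t₀, HasDerivAt E ((∑ i, β i * I i t) * S t - σ * E t) t)
    (hI : ∀ i, ∀ t ≥ t₀, HasDerivAt (I i) (x i * σ * E t - γ i * I i t) t)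
    (hSnn : ∀ t ≥ t₀, 0 ≤ S t) (hEnn : ∀ t ≥ t₀, 0 ≤ E t)
    (hInn : ∀ i, ∀ t ≥ t₀, 0 ≤ I i t)
    (γmin : ℝ) (hγmin : γmin = Finset.univ.inf' Finset.univ_nonempty γ)
    (Sbar : ℝ) (hSbar : Sbar = γmin * (∑ i, x i * β i)⁻¹)
    (lam1 : ℝ → ℝ)
    (hlam1 : ∀ S₀, lam1 S₀ = -(σ + γmin) / 2
      + (1 / 2) * Real.sqrt (4 * σ * (∑ i, β i * x i) * S₀ + (γmin - σ) ^ 2))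
    (hS0pos : 0 < S t₀) (hS0lt : S t₀ < Sbar) :
    lam1 (S t₀) < 0 ∧
    (∃ C > 0, ∀ t ≥ t₀,
      Real.sqrt ((E t) ^ 2 + ∑ i, (I i t) ^ 2)
        ≤ C * Real.exp (lam1 (S t₀) * (t - t₀))) ∧
    Tendsto E atTop (nhds 0) ∧ ∀ i, Tendsto (I i) atTop (nhds 0) := by
  set b := ∑ i, β i * x i
  have hb : 0 < b := sum_pos (fun i _ => mul_pos (hβ i) (hx i)) univ_nonempty
  have hc : b * S t₀ < γmin := by
    have hb' : ∑ i, x i * β i = b := sum_congr rfl fun i _ => mul_comm _ _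
    rwa [hSbar, hb', lt_mul_inv_iff₀ hb, mul_comm] at hS0lt
  have hL : lam1 (S t₀) = dominantRoot σ γmin (b * S t₀) := by
    rw [hlam1, dominantRoot, ← mul_assoc]
  have hLneg : lam1 (S t₀) < 0 :=
    hL ▸ dominantRoot_neg hσ ((by positivity : 0 < b * S t₀).trans hc) hc
  obtain ⟨p, hp, hpS, hσb⟩ := exists_left_eigenvector_dominantRoot (γ := γmin) hσ hb hS0pos
  rw [← hL] at hpS hσb
  obtain ⟨C, hC, hbound⟩ := exists_sqrt_le_mul_exp hσb hpS hp
    (fun i => hγmin ▸ inf'_le _ (mem_univ i)) hβ hE hI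
    (fun t ht => susceptible_le (fun i => (hβ i).le) hS hSnn hInn ht) hEnn hInn
  refine ⟨hLneg, ⟨C, hC, hbound⟩, ?_, fun i => ?_⟩
  · refine tendsto_zero_of_abs_le_mul_exp hLneg fun t ht => (abs_le_sqrt ?_).trans (hbound t ht)
    exact le_add_of_nonneg_right (sum_nonneg fun i _ => sq_nonneg _)
  · refine tendsto_zero_of_abs_le_mul_exp hLneg fun t ht => (abs_le_sqrt ?_).trans (hbound t ht)
    exact (single_le_sum (fun j _ => sq_nonneg (I j t)) (mem_univ i)).trans
      (le_add_of_nonneg_left (sq_nonneg _))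

/-- the non-outbreak condition for the SEIR model with `N` parallel
infectious stages: if `S(t₀) < S̄` then `λ₁(S(t₀)) < 0` and the "infected" part of
the solution decays exponentially fast. -/
theorem stmt_0
    (N : ℕ) [NeZero N]
    (σ : ℝ) (hσ : 0 < σ)
    (γ β x : Fin N → ℝ)
    (hγ : ∀ i, 0 < γ i) (hβ : ∀ i, 0 < β i) (hx : ∀ i, 0 < x i)
    (hxsum : ∑ i, x i = 1)
    (S E R : ℝ → ℝ) (I : Fin N → ℝ → ℝ) (t₀ : ℝ)
    (hS : ∀ t ≥ t₀, HasDerivAt S (-(∑ i, β i * I i t) * S t) t)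
    (hE : ∀ t ≥ t₀, HasDerivAt E ((∑ i, β i * I i t) * S t - σ * E t) t)
    (hI : ∀ i, ∀ t ≥ t₀, HasDerivAt (I i) (x i * σ * E t - γ i * I i t) t)
    (hR : ∀ t ≥ t₀, HasDerivAt R (∑ i, γ i * I i t) t)
    (hSnn : ∀ t ≥ t₀, 0 ≤ S t) (hEnn : ∀ t ≥ t₀, 0 ≤ E t)
    (hInn : ∀ i, ∀ t ≥ t₀, 0 ≤ I i t)
    (γmin : ℝ) (hγmin : γmin = Finset.univ.inf' Finset.univ_nonempty γ)
    (Sbar : ℝ) (hSbar : Sbar = γmin * (∑ i, x i * β i)⁻¹)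
    (lam1 : ℝ → ℝ)
    (hlam1 : ∀ S₀, lam1 S₀ = -(σ + γmin) / 2
      + (1 / 2) * Real.sqrt (4 * σ * (∑ i, β i * x i) * S₀ + (γmin - σ) ^ 2))
    (hS0pos : 0 < S t₀) (hS0lt : S t₀ < Sbar) :
    lam1 (S t₀) < 0 ∧
    (∃ C > 0, ∀ t ≥ t₀,
      Real.sqrt ((E t) ^ 2 + ∑ i, (I i t) ^ 2)
        ≤ C * Real.exp (lam1 (S t₀) * (t - t₀))) ∧
    Tendsto E atTop (nhds 0) ∧ ∀ i, Tendsto (I i) atTop (nhds 0) :=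
  stmt_0_general N σ hσ γ β x hβ hx S E I t₀ hS hE hI hSnn hEnn hInn γmin hγmin Sbar hSbar lam1
    hlam1 hS0pos hS0lt
end

section
/- For S ∈ ℝ, the determinant of the matrix L₀(S) vanishes if and only if S = S̄ = γ (Σ_{i=1}^N x_i β_i)^{-1}. -/
/-!
`L₀(S)` is a diagonal block `-γ I` bordered by one row and one column. Taking the Schur
complement of that block gives `det L₀(S) = (-γ)^N σ (S Σᵢ xᵢβᵢ / γ - 1)`, which vanishes
exactly when `S Σᵢ xᵢβᵢ = γ`.
-/

/-- The `(N+1) × (N+1)` matrix `L₀(S)` of the frozen linearization: first row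
`(−σ, β₁S, …, β_N S)`, first column `(−σ, x₁σ, …, x_N σ)ᵗ`, remaining diagonal
entries `−γ`, all other entries `0`. -/
noncomputable def L0 (N : ℕ) (σ γ : ℝ) (β x : Fin N → ℝ) (S : ℝ) :
    Matrix (Fin (N + 1)) (Fin (N + 1)) ℝ :=
  Matrix.of fun i j =>
    Fin.cases
      (Fin.cases (-σ) (fun k => β k * S) j)
      (fun k => Fin.cases (x k * σ) (fun l => if k = l then -γ else 0) j)
      i

namespace Matrix

variable {K : Type*} {n : ℕ}

def bordered [Zero K] (a : K) (b c : Fin n → K) (D : Matrix (Fin n) (Fin n) K) :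
    Matrix (Fin (n + 1)) (Fin (n + 1)) K :=
  of fun i j => Fin.cases (Fin.cases a b j) (fun k => Fin.cases (c k) (D k) j) i

theorem bordered_eq_submatrix_fromBlocks [Zero K] (a : K) (b c : Fin n → K)
    (D : Matrix (Fin n) (Fin n) K) :
    bordered a b c D =
      (fromBlocks D (replicateCol Unit c) (replicateRow Unit b) (of fun _ _ => a)).submatrix
        ((finSuccEquiv n).trans (Equiv.optionEquivSumPUnit _))
        ((finSuccEquiv n).trans (Equiv.optionEquivSumPUnit _)) := by
  ext i j
  induction i using Fin.cases <;> induction j using Fin.cases <;> simp [bordered]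

theorem det_bordered [Field K] (a : K) (b c : Fin n → K) (D : Matrix (Fin n) (Fin n) K)
    (hD : IsUnit D.det) : (bordered a b c D).det = D.det * (a - b ⬝ᵥ (D⁻¹ *ᵥ c)) := by
  let := D.invertibleOfIsUnitDet hD
  rw [bordered_eq_submatrix_fromBlocks, det_submatrix_equiv_self, det_fromBlocks₁₁,
    det_unique (_ - _), sub_apply, Matrix.mul_assoc, invOf_eq_nonsing_inv,
    ← replicateCol_mulVec, replicateRow_mul_replicateCol_apply, of_apply]

end Matrix

theorem L0_eq_bordered (N : ℕ) (σ γ : ℝ) (β x : Fin N → ℝ) (S : ℝ) :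
    L0 N σ γ β x S =
      Matrix.bordered (-σ) (fun k => β k * S) (fun k => x k * σ) (Matrix.diagonal fun _ => -γ) :=
  rfl

theorem det_L0 {N : ℕ} {σ γ : ℝ} {β x : Fin N → ℝ} {S : ℝ} (hγ : γ ≠ 0) :
    (L0 N σ γ β x S).det = (-γ) ^ N * σ * (S * (∑ i, x i * β i) / γ - 1) := by
  have hinv : (Matrix.diagonal fun _ : Fin N => -γ)⁻¹ = Matrix.diagonal fun _ => (-γ)⁻¹ :=
    Matrix.inv_eq_left_inv (by simp [hγ])
  have hsum : ∑ i, β i * S * ((-γ)⁻¹ * (x i * σ)) = -(σ * (S * (∑ i, x i * β i) / γ)) := by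
    simp only [Finset.mul_sum, Finset.sum_div, ← Finset.sum_neg_distrib]
    exact Finset.sum_congr rfl fun i _ => by field_simp
  rw [L0_eq_bordered, Matrix.det_bordered _ _ _ _ (by simp [hγ]), hinv]
  simp only [Matrix.det_diagonal, Finset.prod_const, Finset.card_univ, Fintype.card_fin,
    Matrix.mulVec_diagonal, dotProduct, hsum]
  ring

theorem stmt_2_general
    (N : ℕ) [NeZero N]
    (σ : ℝ) (hσ : 0 < σ)
    (γ β x : Fin N → ℝ)
    (hγ : ∀ i, 0 < γ i) (hβ : ∀ i, 0 < β i) (hx : ∀ i, 0 < x i)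
    (γmin : ℝ) (hγmin : γmin = Finset.univ.inf' Finset.univ_nonempty γ)
    (Sbar : ℝ) (hSbar : Sbar = γmin * (∑ i, x i * β i)⁻¹)
    (S : ℝ) :
    (L0 N σ γmin β x S).det = 0 ↔ S = Sbar := by
  have hγmin_pos : 0 < γmin := by
    rw [hγmin, Finset.lt_inf'_iff]
    exact fun i _ => hγ i
  have hτ : 0 < ∑ i, x i * β i :=
    Finset.sum_pos (fun i _ => mul_pos (hx i) (hβ i)) Finset.univ_nonempty
  rw [det_L0 hγmin_pos.ne', hSbar, mul_eq_zero, mul_eq_zero, sub_eq_zero,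
    div_eq_one_iff_eq hγmin_pos.ne', eq_mul_inv_iff_mul_eq₀ hτ.ne']
  simp [hσ.ne', hγmin_pos.ne']

/-- `det (L₀(S)) = 0` iff `S = S̄ = γ (Σᵢ xᵢ βᵢ)⁻¹`. -/
theorem stmt_2
    (N : ℕ) [NeZero N]
    (σ : ℝ) (hσ : 0 < σ)
    (γ β x : Fin N → ℝ)
    (hγ : ∀ i, 0 < γ i) (hβ : ∀ i, 0 < β i) (hx : ∀ i, 0 < x i)
    (hxsum : ∑ i, x i = 1)
    (γmin : ℝ) (hγmin : γmin = Finset.univ.inf' Finset.univ_nonempty γ)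
    (Sbar : ℝ) (hSbar : Sbar = γmin * (∑ i, x i * β i)⁻¹)
    (S : ℝ) :
    (L0 N σ γmin β x S).det = 0 ↔ S = Sbar :=
  stmt_2_general N σ hσ γ β x hγ hβ hx γmin hγmin Sbar hSbar S
end

section
/- For every S₀ ∈ ℝ, the characteristic polynomial of the matrix L₀(S₀) factors as (X − λ₁(S₀)) · (X − λ₂(S₀)) · (X + γ)^{N−1}. In particular L₀(S₀) has N + 1 real eigenvalues: λ₁(S₀), λ₂(S₀), and −γ with multiplicity N − 1. -/
/-!
`L₀(S₀)` is an arrowhead matrix, and so is its characteristic matrix, with diagonal entry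
`d = X + γ`. Multiplying an arrowhead matrix on the right by the lower triangular arrowhead
matrix with corner `d`, unit diagonal and first column `-v` clears its first column, so
`d · det = (a d - u ⬝ᵥ v) dⁿ`. Over `ℝ[X]` the factor `X + γ` is monic, hence cancellable, and
the remaining quadratic `(X + σ)(X + γ) - σ S₀ ∑ βᵢ xᵢ` has discriminant
`4 σ S₀ ∑ βᵢ xᵢ + (γ - σ)² ≥ 0` and the roots `λ₁(S₀)`, `λ₂(S₀)`.
-/

open Polynomial

namespace Matrix

variable {R : Type*} [CommRing R] {n : ℕ}

def arrowhead (a d : R) (u v : Fin n → R) : Matrix (Fin (n + 1)) (Fin (n + 1)) R :=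
  of fun i j =>
    Fin.cases (Fin.cases a u j) (fun k => Fin.cases (v k) (fun l => if k = l then d else 0) j) i

theorem arrowhead_mul_arrowhead_zero (a d a' d' : R) (u v v' : Fin n → R) :
    arrowhead a d u v * arrowhead a' d' 0 v' =
      arrowhead (a * a' + u ⬝ᵥ v') (d * d') (d' • u) (a' • v + d • v') := by
  ext i j
  rw [mul_apply, Fin.sum_univ_succ]
  cases i using Fin.cases <;> cases j using Fin.cases <;>
    simp [arrowhead, dotProduct, mul_comm]

theorem det_arrowhead_of_col_zero (a d : R) (u : Fin n → R) :
    (arrowhead a d u 0).det = a * d ^ n := by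
  rw [det_of_isUpperTriangular, Fin.prod_univ_succ]
  · simp [arrowhead]
  · intro i j hji
    cases i using Fin.cases with
    | zero => exact absurd hji (Fin.not_lt_zero _)
    | succ k => cases j using Fin.cases with
      | zero => simp [arrowhead]
      | succ l => simp [arrowhead, (Fin.succ_lt_succ_iff.mp hji).ne']

theorem det_arrowhead_of_row_zero (a d : R) (v : Fin n → R) :
    (arrowhead a d 0 v).det = a * d ^ n := by
  rw [det_of_isLowerTriangular, Fin.prod_univ_succ]
  · simp [arrowhead]
  · intro i j hij
    cases j using Fin.cases with
    | zero => exact absurd hij (Fin.not_lt_zero _)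
    | succ l => cases i using Fin.cases with
      | zero => simp [arrowhead]
      | succ k => simp [arrowhead, (Fin.succ_lt_succ_iff.mp hij).ne]

theorem mul_det_arrowhead (a d : R) (u v : Fin n → R) :
    d * (arrowhead a d u v).det = (a * d - u ⬝ᵥ v) * d ^ n := by
  have h := congrArg det (arrowhead_mul_arrowhead_zero a d d 1 u v (-v))
  rw [det_mul, det_arrowhead_of_row_zero] at h
  simpa [mul_comm, ← sub_eq_add_neg, det_arrowhead_of_col_zero] using h

theorem charmatrix_arrowhead (a d : R) (u v : Fin n → R) :
    (arrowhead a d u v).charmatrix = arrowhead (X - C a) (X - C d) (-(C ∘ u)) (-(C ∘ v)) := by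
  ext i j : 1
  cases i using Fin.cases <;> cases j using Fin.cases
  case succ.succ k l => by_cases hkl : k = l <;> simp [arrowhead, hkl]
  all_goals simp [arrowhead, Fin.succ_ne_zero, (Fin.succ_ne_zero _).symm]

theorem charpoly_arrowhead [NeZero n] (a d : R) (u v : Fin n → R) :
    (arrowhead a d u v).charpoly =
      ((X - C a) * (X - C d) - C (u ⬝ᵥ v)) * (X - C d) ^ (n - 1) := by
  apply (monic_X_sub_C d).isRegular.left
  dsimp only
  rw [charpoly, charmatrix_arrowhead, mul_det_arrowhead, neg_dotProduct, dotProduct_neg, neg_neg,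
    ← RingHom.map_dotProduct, mul_left_comm, ← pow_succ', Nat.sub_add_cancel NeZero.one_le]

end Matrix

theorem Polynomial.X_add_C_mul_X_add_C_sub_C_eq {K : Type*} [Field K] [NeZero (2 : K)]
    (p q c r : K) (hr : r ^ 2 = 4 * c + (q - p) ^ 2) :
    (X + C p) * (X + C q) - C c =
      (X - C (-(p + q) / 2 + 1 / 2 * r)) * (X - C (-(p + q) / 2 - 1 / 2 * r)) := by
  set α := -(p + q) / 2 + 1 / 2 * r
  set β := -(p + q) / 2 - 1 / 2 * r
  have hsum : α + β = -(p + q) := by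
    simp only [α, β]
    field_simp
    ring
  have hprod : α * β = p * q - c := by
    simp only [α, β]
    field_simp
    linear_combination (-1 : K) * hr
  calc (X + C p) * (X + C q) - C c = X ^ 2 - C (α + β) * X + C (α * β) := by
        rw [hsum, hprod]
        simp only [map_neg, map_add, map_sub, map_mul]
        ring
    _ = (X - C α) * (X - C β) := by
        simp only [map_add, map_mul]
        ring

theorem stmt_3_general
    (N : ℕ) [NeZero N]
    (σ : ℝ) (hσ : 0 < σ)
    (β x : Fin N → ℝ)
    (hβ : ∀ i, 0 < β i) (hx : ∀ i, 0 < x i)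
    (γmin : ℝ)
    (lam1 lam2 : ℝ → ℝ)
    (hlam1 : ∀ S₀, lam1 S₀ = -(σ + γmin) / 2
      + (1 / 2) * Real.sqrt (4 * σ * (∑ i, β i * x i) * S₀ + (γmin - σ) ^ 2))
    (hlam2 : ∀ S₀, lam2 S₀ = -(σ + γmin) / 2
      - (1 / 2) * Real.sqrt (4 * σ * (∑ i, β i * x i) * S₀ + (γmin - σ) ^ 2))
    (S₀ : ℝ) (hS₀ : 0 ≤ S₀) :
    (L0 N σ γmin β x S₀).charpoly
      = (X - C (lam1 S₀)) * (X - C (lam2 S₀)) * (X + C γmin) ^ (N - 1) := by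
  have hdisc : 0 ≤ 4 * σ * (∑ i, β i * x i) * S₀ + (γmin - σ) ^ 2 := by
    have := Finset.sum_nonneg fun i (_ : i ∈ Finset.univ) => (mul_pos (hβ i) (hx i)).le
    positivity
  have hL0 : L0 N σ γmin β x S₀ =
      Matrix.arrowhead (-σ) (-γmin) (fun k => β k * S₀) (fun k => x k * σ) := rfl
  have hdot : (fun k => β k * S₀) ⬝ᵥ (fun k => x k * σ) = σ * (∑ i, β i * x i) * S₀ := by
    simp only [dotProduct, Finset.mul_sum, Finset.sum_mul]
    exact Finset.sum_congr rfl fun k _ => by ring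
  rw [hL0, Matrix.charpoly_arrowhead, hdot, hlam1, hlam2, map_neg, map_neg, sub_neg_eq_add,
    sub_neg_eq_add, X_add_C_mul_X_add_C_sub_C_eq σ γmin _ _ (by rw [Real.sq_sqrt hdisc]; ring)]

/-- for `S₀ ≥ 0` the characteristic polynomial of `L₀(S₀)` factors as
`(X − λ₁(S₀)) (X − λ₂(S₀)) (X + γ)^(N−1)`; in particular `L₀(S₀)` has the `N + 1`
real eigenvalues `λ₁(S₀)`, `λ₂(S₀)` and `−γ` (the latter with multiplicity `N − 1`). -/
theorem stmt_3
    (N : ℕ) [NeZero N]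
    (σ : ℝ) (hσ : 0 < σ)
    (γ β x : Fin N → ℝ)
    (hγ : ∀ i, 0 < γ i) (hβ : ∀ i, 0 < β i) (hx : ∀ i, 0 < x i)
    (hxsum : ∑ i, x i = 1)
    (γmin : ℝ) (hγmin : γmin = Finset.univ.inf' Finset.univ_nonempty γ)
    (lam1 lam2 : ℝ → ℝ)
    (hlam1 : ∀ S₀, lam1 S₀ = -(σ + γmin) / 2
      + (1 / 2) * Real.sqrt (4 * σ * (∑ i, β i * x i) * S₀ + (γmin - σ) ^ 2))
    (hlam2 : ∀ S₀, lam2 S₀ = -(σ + γmin) / 2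
      - (1 / 2) * Real.sqrt (4 * σ * (∑ i, β i * x i) * S₀ + (γmin - σ) ^ 2))
    (S₀ : ℝ) (hS₀ : 0 ≤ S₀) :
    (L0 N σ γmin β x S₀).charpoly
      = (X - C (lam1 S₀)) * (X - C (lam2 S₀)) * (X + C γmin) ^ (N - 1) :=
  stmt_3_general N σ hσ β x hβ hx γmin lam1 lam2 hlam1 hlam2 S₀ hS₀
end

section
/- Suppose S, E, I_1, …, I_N : ℝ → ℝ are differentiable and satisfy the SEIR system with N parallel infectious stages at time t. Then for every real Z, the function U_Z(t) = E(t) + Z Σ_{i=1}^N (β_i/γ_i) I_i(t) is differentiable at t with U_Z'(t) = (S(t) − Z) Σ_{i=1}^N β_i I_i(t) − σ E(t) (1 − Z/S*), where S* = (Σ_i x_i β_i/γ_i)^{-1}. In particular, for Z = S*, U_{S*}'(t) = (S(t) − S*) Σ_i β_i I_i(t). -/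
/-!
Each `Iᵢ` contributes `(βᵢ/γᵢ) Iᵢ' = xᵢ σ E (βᵢ/γᵢ) - βᵢ Iᵢ`, so the weighted infectious load
`Σᵢ (βᵢ/γᵢ) Iᵢ` grows at rate `σ E / S* - Σᵢ βᵢ Iᵢ`. Adding `Z` times this to `E'` gives the
formula for `U_Z'`; at `Z = S*` the two `σ E` terms cancel.
-/

open Finset

section SEIR

variable {ι : Type*} [Fintype ι]

theorem hasDerivAt_sum_div_mul_infectious (σ : ℝ) (γ β x : ι → ℝ) (hγ : ∀ i, γ i ≠ 0)
    (E : ℝ → ℝ) (I : ι → ℝ → ℝ) (t : ℝ)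
    (hI : ∀ i, HasDerivAt (I i) (x i * σ * E t - γ i * I i t) t) :
    HasDerivAt (fun s => ∑ i, β i / γ i * I i s)
      (σ * E t * ∑ i, x i * β i / γ i - ∑ i, β i * I i t) t := by
  refine (HasDerivAt.fun_sum fun i _ => (hI i).const_mul (β i / γ i)).congr_deriv ?_
  rw [mul_sum, ← sum_sub_distrib]
  refine sum_congr rfl fun i _ => ?_
  field_simp [hγ i]

theorem hasDerivAt_exposed_add_mul_sum_div_mul_infectious (σ : ℝ) (γ β x : ι → ℝ)
    (hγ : ∀ i, γ i ≠ 0) (S E : ℝ → ℝ) (I : ι → ℝ → ℝ) (t Z : ℝ)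
    (hE : HasDerivAt E ((∑ i, β i * I i t) * S t - σ * E t) t)
    (hI : ∀ i, HasDerivAt (I i) (x i * σ * E t - γ i * I i t) t) :
    HasDerivAt (fun s => E s + Z * ∑ i, β i / γ i * I i s)
      ((S t - Z) * (∑ i, β i * I i t) - σ * E t * (1 - Z * ∑ i, x i * β i / γ i)) t :=
  (hE.fun_add ((hasDerivAt_sum_div_mul_infectious σ γ β x hγ E I t hI).const_mul Z)).congr_deriv
    (by ring)

theorem sum_mul_div_pos [Nonempty ι] (γ β x : ι → ℝ) (hγ : ∀ i, 0 < γ i) (hβ : ∀ i, 0 < β i)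
    (hx : ∀ i, 0 < x i) : 0 < ∑ i, x i * β i / γ i :=
  sum_pos (fun i _ => div_pos (mul_pos (hx i) (hβ i)) (hγ i)) univ_nonempty

end SEIR

theorem stmt_4_general
    (N : ℕ) [NeZero N]
    (σ : ℝ)
    (γ β x : Fin N → ℝ)
    (hγ : ∀ i, 0 < γ i) (hβ : ∀ i, 0 < β i) (hx : ∀ i, 0 < x i)
    (Sstar : ℝ) (hSstar : Sstar = (∑ i, x i * β i / γ i)⁻¹)
    (S E : ℝ → ℝ) (I : Fin N → ℝ → ℝ) (t : ℝ)
    (hE : HasDerivAt E ((∑ i, β i * I i t) * S t - σ * E t) t)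
    (hI : ∀ i, HasDerivAt (I i) (x i * σ * E t - γ i * I i t) t) :
    (∀ Z : ℝ, HasDerivAt (fun s => E s + Z * ∑ i, β i / γ i * I i s)
      ((S t - Z) * (∑ i, β i * I i t) - σ * E t * (1 - Z / Sstar)) t) ∧
    HasDerivAt (fun s => E s + Sstar * ∑ i, β i / γ i * I i s)
      ((S t - Sstar) * (∑ i, β i * I i t)) t := by
  have hU (Z : ℝ) := hasDerivAt_exposed_add_mul_sum_div_mul_infectious σ γ β x
    (fun i => (hγ i).ne') S E I t Z hE hI
  have hdiv (Z : ℝ) : Z / Sstar = Z * ∑ i, x i * β i / γ i := by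
    rw [hSstar, div_inv_eq_mul]
  have hSstar_mul : Sstar * ∑ i, x i * β i / γ i = 1 := by
    rw [hSstar]
    exact inv_mul_cancel₀ (sum_mul_div_pos γ β x hγ hβ hx).ne'
  refine ⟨fun Z => by simpa only [hdiv] using hU Z, ?_⟩
  simpa only [hSstar_mul, sub_self, mul_zero, sub_zero] using hU Sstar

/-- derivative of the Lyapunov-type function
`U_Z = E + Z Σᵢ (βᵢ/γᵢ) Iᵢ` along solutions of the SEIR model with `N` parallel
infectious stages, and its specialization at `Z = S*`. -/
theorem stmt_4
    (N : ℕ) [NeZero N]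
    (σ : ℝ) (hσ : 0 < σ)
    (γ β x : Fin N → ℝ)
    (hγ : ∀ i, 0 < γ i) (hβ : ∀ i, 0 < β i) (hx : ∀ i, 0 < x i)
    (hxsum : ∑ i, x i = 1)
    (Sstar : ℝ) (hSstar : Sstar = (∑ i, x i * β i / γ i)⁻¹)
    (S E : ℝ → ℝ) (I : Fin N → ℝ → ℝ) (t : ℝ)
    (hS : HasDerivAt S (-(∑ i, β i * I i t) * S t) t)
    (hE : HasDerivAt E ((∑ i, β i * I i t) * S t - σ * E t) t)
    (hI : ∀ i, HasDerivAt (I i) (x i * σ * E t - γ i * I i t) t) :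
    (∀ Z : ℝ, HasDerivAt (fun s => E s + Z * ∑ i, β i / γ i * I i s)
      ((S t - Z) * (∑ i, β i * I i t) - σ * E t * (1 - Z / Sstar)) t) ∧
    HasDerivAt (fun s => E s + Sstar * ∑ i, β i / γ i * I i s)
      ((S t - Sstar) * (∑ i, β i * I i t)) t :=
  stmt_4_general N σ γ β x hγ hβ hx Sstar hSstar S E I t hE hI
end

section
/- (The Weak Outbreak Condition.) Suppose S, E, I_1, …, I_N : ℝ → ℝ are differentiable, satisfy the SEIR system with N parallel infectious stages for all t ≥ t₀, that S(t) ≥ 0 and I_i(t) ≥ 0 for all t ≥ t₀ and all i, that for every t ≥ t₀ there exists an index i with I_i(t) > 0, and that S(t₀) < S*. Then the function U(t) = E(t) + S* Σ_{i=1}^N (β_i/γ_i) I_i(t) is strictly decreasing on [t₀, ∞); in particular U(t) < U(t₀) for every t > t₀. -/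
/-!
Along the SEIR flow, `U = E + S* Σᵢ (βᵢ/γᵢ) Iᵢ` satisfies `U' = (Σᵢ βᵢ Iᵢ)(S - S*)`: by the
definition of `S*`, the weighted inflow `S* Σᵢ (βᵢ/γᵢ) xᵢ σE` into the `Iᵢ` cancels the outflow
`σE` from `E`, and the weights turn the recoveries `γᵢ Iᵢ` into `βᵢ Iᵢ`. Since `S' ≤ 0`, the
condition `S(t₀) < S*` persists, and as some `Iᵢ` is always positive, `U' < 0`.
-/

open Set

lemma antitoneOn_Ici_of_hasDerivAt_nonpos {f f' : ℝ → ℝ} {a : ℝ}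
    (hf : ∀ t ≥ a, HasDerivAt f (f' t) t) (hf' : ∀ t > a, f' t ≤ 0) :
    AntitoneOn f (Ici a) :=
  antitoneOn_of_hasDerivWithinAt_nonpos (convex_Ici a)
    (fun t ht => (hf t ht).continuousAt.continuousWithinAt)
    (fun t ht => by
      rw [interior_Ici] at ht ⊢
      exact (hf t (le_of_lt ht)).hasDerivWithinAt)
    (fun t ht => hf' t (by rwa [interior_Ici] at ht))

lemma strictAntiOn_Ici_of_hasDerivAt_neg {f f' : ℝ → ℝ} {a : ℝ}
    (hf : ∀ t ≥ a, HasDerivAt f (f' t) t) (hf' : ∀ t > a, f' t < 0) :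
    StrictAntiOn f (Ici a) :=
  strictAntiOn_of_hasDerivWithinAt_neg (convex_Ici a)
    (fun t ht => (hf t ht).continuousAt.continuousWithinAt)
    (fun t ht => by
      rw [interior_Ici] at ht ⊢
      exact (hf t (le_of_lt ht)).hasDerivWithinAt)
    (fun t ht => hf' t (by rwa [interior_Ici] at ht))

namespace SEIR

variable {ι : Type*} [Fintype ι] {σ Sstar t₀ : ℝ} {γ β x : ι → ℝ} {S E : ℝ → ℝ}
  {I : ι → ℝ → ℝ}

noncomputable def lyapunov (Sstar : ℝ) (β γ : ι → ℝ) (E : ℝ → ℝ) (I : ι → ℝ → ℝ) : ℝ → ℝ :=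
  fun s => E s + Sstar * ∑ i, β i / γ i * I i s

lemma hasDerivAt_lyapunov (hγ : ∀ i, γ i ≠ 0) (hSstar : Sstar * ∑ i, x i * β i / γ i = 1)
    {t : ℝ} (hE : HasDerivAt E ((∑ i, β i * I i t) * S t - σ * E t) t)
    (hI : ∀ i, HasDerivAt (I i) (x i * σ * E t - γ i * I i t) t) :
    HasDerivAt (lyapunov Sstar β γ E I) ((∑ i, β i * I i t) * (S t - Sstar)) t := by
  have hsum : HasDerivAt (fun s => ∑ i, β i / γ i * I i s)
      (∑ i, β i / γ i * (x i * σ * E t - γ i * I i t)) t :=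
    HasDerivAt.fun_sum fun i _ => (hI i).const_mul _
  refine (hE.fun_add (hsum.const_mul Sstar)).congr_deriv ?_
  have expand : ∑ i, β i / γ i * (x i * σ * E t - γ i * I i t)
      = σ * E t * ∑ i, x i * β i / γ i - ∑ i, β i * I i t := by
    rw [Finset.mul_sum, ← Finset.sum_sub_distrib]
    refine Finset.sum_congr rfl fun i _ => ?_
    field_simp [hγ i]
  rw [expand]
  linear_combination σ * E t * hSstar

lemma antitoneOn_susceptible (hβ : ∀ i, 0 ≤ β i)
    (hS : ∀ t ≥ t₀, HasDerivAt S (-(∑ i, β i * I i t) * S t) t)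
    (hSnn : ∀ t ≥ t₀, 0 ≤ S t) (hInn : ∀ i, ∀ t ≥ t₀, 0 ≤ I i t) :
    AntitoneOn S (Ici t₀) :=
  antitoneOn_Ici_of_hasDerivAt_nonpos hS fun t ht =>
    mul_nonpos_of_nonpos_of_nonneg
      (neg_nonpos.mpr (Finset.sum_nonneg fun i _ => mul_nonneg (hβ i) (hInn i t ht.le)))
      (hSnn t ht.le)

lemma strictAntiOn_lyapunov (hγ : ∀ i, γ i ≠ 0) (hβ : ∀ i, 0 < β i)
    (hSstar : Sstar * ∑ i, x i * β i / γ i = 1)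
    (hS : ∀ t ≥ t₀, HasDerivAt S (-(∑ i, β i * I i t) * S t) t)
    (hE : ∀ t ≥ t₀, HasDerivAt E ((∑ i, β i * I i t) * S t - σ * E t) t)
    (hI : ∀ i, ∀ t ≥ t₀, HasDerivAt (I i) (x i * σ * E t - γ i * I i t) t)
    (hSnn : ∀ t ≥ t₀, 0 ≤ S t) (hInn : ∀ i, ∀ t ≥ t₀, 0 ≤ I i t)
    (hIpos : ∀ t ≥ t₀, ∃ i, 0 < I i t) (hS0 : S t₀ < Sstar) :
    StrictAntiOn (lyapunov Sstar β γ E I) (Ici t₀) := by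
  have hSanti := antitoneOn_susceptible (fun i => (hβ i).le) hS hSnn hInn
  refine strictAntiOn_Ici_of_hasDerivAt_neg
    (fun t ht => hasDerivAt_lyapunov hγ hSstar (hE t ht) fun i => hI i t ht) fun t ht => ?_
  have hforce : 0 < ∑ i, β i * I i t := by
    obtain ⟨i, hi⟩ := hIpos t ht.le
    exact Finset.sum_pos' (fun j _ => mul_nonneg (hβ j).le (hInn j t ht.le))
      ⟨i, Finset.mem_univ i, mul_pos (hβ i) hi⟩
  have hSlt : S t < Sstar := (hSanti self_mem_Ici ht.le ht.le).trans_lt hS0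
  exact mul_neg_of_pos_of_neg hforce (sub_neg.mpr hSlt)

end SEIR

theorem stmt_5_general
    (N : ℕ)
    (σ : ℝ)
    (γ β x : Fin N → ℝ)
    (hγ : ∀ i, 0 < γ i) (hβ : ∀ i, 0 < β i)
    (Sstar : ℝ) (hSstar : Sstar = (∑ i, x i * β i / γ i)⁻¹)
    (S E : ℝ → ℝ) (I : Fin N → ℝ → ℝ) (t₀ : ℝ)
    (hS : ∀ t ≥ t₀, HasDerivAt S (-(∑ i, β i * I i t) * S t) t)
    (hE : ∀ t ≥ t₀, HasDerivAt E ((∑ i, β i * I i t) * S t - σ * E t) t)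
    (hI : ∀ i, ∀ t ≥ t₀, HasDerivAt (I i) (x i * σ * E t - γ i * I i t) t)
    (hSnn : ∀ t ≥ t₀, 0 ≤ S t)
    (hInn : ∀ i, ∀ t ≥ t₀, 0 ≤ I i t)
    (hIpos : ∀ t ≥ t₀, ∃ i, 0 < I i t)
    (hS0 : S t₀ < Sstar) :
    StrictAntiOn (fun s => E s + Sstar * ∑ i, β i / γ i * I i s) (Set.Ici t₀) ∧
    ∀ t > t₀, E t + Sstar * ∑ i, β i / γ i * I i t
      < E t₀ + Sstar * ∑ i, β i / γ i * I i t₀ := by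
  have hSstar_ne : Sstar ≠ 0 := ((hSnn t₀ le_rfl).trans_lt hS0).ne'
  have hSstar_mul : Sstar * ∑ i, x i * β i / γ i = 1 := by
    rw [hSstar] at hSstar_ne ⊢
    exact inv_mul_cancel₀ (inv_eq_zero.not.mp hSstar_ne)
  have hU := SEIR.strictAntiOn_lyapunov (fun i => (hγ i).ne') hβ hSstar_mul hS hE hI hSnn hInn
    hIpos hS0
  exact ⟨hU, fun t ht => hU self_mem_Ici ht.le ht⟩

/-- The Weak Outbreak Condition: if `S(t₀) < S*` then the function
`U = E + S* Σᵢ (βᵢ/γᵢ) Iᵢ` is strictly decreasing on `[t₀, ∞)`; in particular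
`U(t) < U(t₀)` for every `t > t₀`. -/
theorem stmt_5
    (N : ℕ) [NeZero N]
    (σ : ℝ) (hσ : 0 < σ)
    (γ β x : Fin N → ℝ)
    (hγ : ∀ i, 0 < γ i) (hβ : ∀ i, 0 < β i) (hx : ∀ i, 0 < x i)
    (hxsum : ∑ i, x i = 1)
    (Sstar : ℝ) (hSstar : Sstar = (∑ i, x i * β i / γ i)⁻¹)
    (S E : ℝ → ℝ) (I : Fin N → ℝ → ℝ) (t₀ : ℝ)
    (hS : ∀ t ≥ t₀, HasDerivAt S (-(∑ i, β i * I i t) * S t) t)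
    (hE : ∀ t ≥ t₀, HasDerivAt E ((∑ i, β i * I i t) * S t - σ * E t) t)
    (hI : ∀ i, ∀ t ≥ t₀, HasDerivAt (I i) (x i * σ * E t - γ i * I i t) t)
    (hSnn : ∀ t ≥ t₀, 0 ≤ S t)
    (hInn : ∀ i, ∀ t ≥ t₀, 0 ≤ I i t)
    (hIpos : ∀ t ≥ t₀, ∃ i, 0 < I i t)
    (hS0 : S t₀ < Sstar) :
    StrictAntiOn (fun s => E s + Sstar * ∑ i, β i / γ i * I i s) (Set.Ici t₀) ∧
    ∀ t > t₀, E t + Sstar * ∑ i, β i / γ i * I i t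
      < E t₀ + Sstar * ∑ i, β i / γ i * I i t₀ :=
  stmt_5_general N σ γ β x hγ hβ Sstar hSstar S E I t₀ hS hE hI hSnn hInn hIpos hS0
end

section
/- (Fundamental Principle of Finite Strategies.) Let β_1, …, β_N : ℝ → ℝ be continuous nonnegative functions and let β_1⁰, …, β_N⁰ > 0 and t_F ∈ ℝ be such that β_i(t) = β_i⁰ for all t ≥ t_F and all i (a finite control strategy). Suppose S, E, I_1, …, I_N : ℝ → ℝ are differentiable, nonnegative, and satisfy for all t the time-dependent SEIR system S'(t) = −(Σ_i β_i(t) I_i(t)) S(t), E'(t) = (Σ_i β_i(t) I_i(t)) S(t) − σ E(t), I_i'(t) = x_i σ E(t) − γ_i I_i(t). If E(t_F) + Σ_i I_i(t_F) > 0, then S(t) converges as t → ∞ to a limit S_∞ satisfying S_∞ < S*₀ = (Σ_i x_i β_i⁰/γ_i)^{-1}. -/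
/-!
`S` decreases to some `S_∞`. If `S_∞ ≥ S*₀`, take weights `cᵢ = S*₀ β⁰ᵢ / γᵢ`, so that
`∑ cᵢ xᵢ = 1`: after `t_F` the weighted infected mass `L = E + ∑ cᵢ Iᵢ` has derivative
`(∑ β⁰ᵢ Iᵢ)(S − S*₀) ≥ 0`, hence `L ≥ L(t_F) > 0` on `(t_F, ∞)`. But the nonnegative functions
`S + E` and `S + E + Iᵢ / xᵢ` decrease at rates `σ E` and `γᵢ Iᵢ / xᵢ`, so `E` and every `Iᵢ`,
hence `L`, are integrable on `(t_F, ∞)`: a contradiction.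
-/

open Filter MeasureTheory Set Topology

lemma tendsto_iInf_of_hasDerivAt_nonpos {V V' : ℝ → ℝ} (hV : ∀ t, HasDerivAt V (V' t) t)
    (hV' : ∀ t, V' t ≤ 0) (hV0 : ∀ t, 0 ≤ V t) : Tendsto V atTop (𝓝 (⨅ t, V t)) :=
  tendsto_atTop_ciInf (antitone_of_hasDerivAt_nonpos hV hV') ⟨0, by rintro _ ⟨t, rfl⟩; exact hV0 t⟩

lemma integrableOn_Ioi_of_hasDerivAt_neg {V f : ℝ → ℝ} (hV : ∀ t, HasDerivAt V (-f t) t)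
    (hf : ∀ t, 0 ≤ f t) (hV0 : ∀ t, 0 ≤ V t) (a : ℝ) : IntegrableOn f (Ioi a) := by
  have hf' : ∀ t, -f t ≤ 0 := fun t => neg_nonpos.2 (hf t)
  simpa using (integrableOn_Ioi_deriv_of_nonpos' (fun t _ => hV t) (fun t _ => hf' t)
    (tendsto_iInf_of_hasDerivAt_nonpos hV hf' hV0)).neg

lemma not_integrableOn_Ioi_of_pos_le {f : ℝ → ℝ} {a δ : ℝ} (hδ : 0 < δ)
    (hf : ∀ t > a, δ ≤ f t) : ¬ IntegrableOn f (Ioi a) := fun hint => by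
  have hconst : IntegrableOn (fun _ => δ) (Ioi a) :=
    hint.mono' aestronglyMeasurable_const <| ae_restrict_of_forall_mem measurableSet_Ioi
      fun t ht => by rw [Real.norm_of_nonneg hδ.le]; exact hf t ht
  rw [integrableOn_const_iff, Real.volume_Ioi] at hconst
  simp [hδ.ne'] at hconst

lemma add_sum_mul_pos {ι : Type*} [Fintype ι] {a : ℝ} {c v : ι → ℝ} (hc : ∀ i, 0 < c i)
    (ha : 0 ≤ a) (hv : ∀ i, 0 ≤ v i) (h : 0 < a + ∑ i, v i) : 0 < a + ∑ i, c i * v i := by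
  by_contra! hle
  have hcv : ∀ i, 0 ≤ c i * v i := fun i => mul_nonneg (hc i).le (hv i)
  have hsum := Finset.sum_nonneg fun i (_ : i ∈ Finset.univ) => hcv i
  have hterms := (Finset.sum_eq_zero_iff_of_nonneg fun i _ => hcv i).1 (by linarith)
  have hv0 : ∑ i, v i = 0 := Finset.sum_eq_zero fun i hi =>
    (mul_eq_zero.1 (hterms i hi)).resolve_left (hc i).ne'
  linarith

namespace SEIR

variable {N : ℕ} {σ : ℝ} {γ x : Fin N → ℝ} {β : Fin N → ℝ → ℝ} {S E : ℝ → ℝ}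
  {I : Fin N → ℝ → ℝ}

lemma integrableOn_Ioi_exposed (hσ : 0 < σ)
    (hS : ∀ t, HasDerivAt S (-(∑ i, β i t * I i t) * S t) t)
    (hE : ∀ t, HasDerivAt E ((∑ i, β i t * I i t) * S t - σ * E t) t)
    (hSnn : ∀ t, 0 ≤ S t) (hEnn : ∀ t, 0 ≤ E t) (a : ℝ) : IntegrableOn E (Ioi a) := by
  refine integrableOn_Ioi_of_hasDerivAt_neg (V := fun t => (S t + E t) / σ) (fun t => ?_) hEnn
    (fun t => div_nonneg (add_nonneg (hSnn t) (hEnn t)) hσ.le) a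
  refine (((hS t).add (hE t)).div_const σ).congr_deriv ?_
  field_simp
  ring

lemma integrableOn_Ioi_infectious
    (hS : ∀ t, HasDerivAt S (-(∑ i, β i t * I i t) * S t) t)
    (hE : ∀ t, HasDerivAt E ((∑ i, β i t * I i t) * S t - σ * E t) t)
    (hI : ∀ i, ∀ t, HasDerivAt (I i) (x i * σ * E t - γ i * I i t) t)
    (hSnn : ∀ t, 0 ≤ S t) (hEnn : ∀ t, 0 ≤ E t) (hInn : ∀ i t, 0 ≤ I i t)
    {i : Fin N} (hx : 0 < x i) (hγ : 0 < γ i) (a : ℝ) : IntegrableOn (I i) (Ioi a) := by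
  refine integrableOn_Ioi_of_hasDerivAt_neg
    (V := fun t => (x i * (S t + E t) + I i t) / γ i) (fun t => ?_) (hInn i)
    (fun t => by have := hSnn t; have := hEnn t; have := hInn i t; positivity) a
  refine ((((hS t).add (hE t)).const_mul (x i)).add (hI i t)).div_const (γ i) |>.congr_deriv ?_
  field_simp
  ring

lemma hasDerivAt_weighted_infected (c : Fin N → ℝ) (hc : ∑ i, c i * x i = 1)
    (hE : ∀ t, HasDerivAt E ((∑ i, β i t * I i t) * S t - σ * E t) t)
    (hI : ∀ i, ∀ t, HasDerivAt (I i) (x i * σ * E t - γ i * I i t) t) (t : ℝ) :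
    HasDerivAt (fun t => E t + ∑ i, c i * I i t)
      ((∑ i, β i t * I i t) * S t - ∑ i, c i * γ i * I i t) t := by
  refine ((hE t).add (HasDerivAt.fun_sum (u := Finset.univ) fun i _ =>
    (hI i t).const_mul (c i))).congr_deriv ?_
  have hσE : ∑ i, c i * (x i * σ * E t) = σ * E t := by
    rw [← mul_one (σ * E t), ← hc, Finset.mul_sum]
    exact Finset.sum_congr rfl fun i _ => by ring
  rw [Finset.sum_congr rfl fun i _ => mul_sub (c i) _ _, Finset.sum_sub_distrib, hσE]
  simp only [mul_assoc]
  ring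

lemma monotoneOn_weighted_infected {β0 : Fin N → ℝ} {S₀ tF : ℝ} (hγ : ∀ i, γ i ≠ 0)
    (hβ0 : ∀ i, 0 ≤ β0 i) (hc : ∑ i, S₀ * β0 i / γ i * x i = 1)
    (hfin : ∀ i, ∀ t ≥ tF, β i t = β0 i)
    (hE : ∀ t, HasDerivAt E ((∑ i, β i t * I i t) * S t - σ * E t) t)
    (hI : ∀ i, ∀ t, HasDerivAt (I i) (x i * σ * E t - γ i * I i t) t)
    (hInn : ∀ i t, 0 ≤ I i t) (hSge : ∀ t ≥ tF, S₀ ≤ S t) :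
    MonotoneOn (fun t => E t + ∑ i, S₀ * β0 i / γ i * I i t) (Ici tF) := by
  have hL := hasDerivAt_weighted_infected _ hc hE hI
  refine monotoneOn_of_hasDerivWithinAt_nonneg (convex_Ici tF)
    (fun t _ => (hL t).continuousAt.continuousWithinAt)
    (fun t _ => (hL t).hasDerivWithinAt) fun t ht => ?_
  rw [interior_Ici] at ht
  have hL' : (∑ i, β i t * I i t) * S t - ∑ i, S₀ * β0 i / γ i * γ i * I i t
      = (∑ i, β0 i * I i t) * (S t - S₀) := by
    simp only [hfin _ t ht.le, div_mul_cancel₀ _ (hγ _), mul_sub, Finset.sum_mul]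
    simp only [mul_assoc, mul_comm S₀]
  rw [hL']
  exact mul_nonneg (Finset.sum_nonneg fun i _ => mul_nonneg (hβ0 i) (hInn i t))
    (sub_nonneg.2 (hSge t ht.le))

end SEIR

theorem stmt_7_general
    (N : ℕ) [NeZero N]
    (σ : ℝ) (hσ : 0 < σ)
    (γ x : Fin N → ℝ)
    (hγ : ∀ i, 0 < γ i) (hx : ∀ i, 0 < x i)
    (β : Fin N → ℝ → ℝ) (β0 : Fin N → ℝ) (tF : ℝ)
    (hβnn : ∀ i t, 0 ≤ β i t)
    (hβ0 : ∀ i, 0 < β0 i)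
    (hfin : ∀ i, ∀ t ≥ tF, β i t = β0 i)
    (S E : ℝ → ℝ) (I : Fin N → ℝ → ℝ)
    (hS : ∀ t, HasDerivAt S (-(∑ i, β i t * I i t) * S t) t)
    (hE : ∀ t, HasDerivAt E ((∑ i, β i t * I i t) * S t - σ * E t) t)
    (hI : ∀ i, ∀ t, HasDerivAt (I i) (x i * σ * E t - γ i * I i t) t)
    (hSnn : ∀ t, 0 ≤ S t) (hEnn : ∀ t, 0 ≤ E t)
    (hInn : ∀ i t, 0 ≤ I i t)
    (hpos : 0 < E tF + ∑ i, I i tF) :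
    ∃ Sinf : ℝ, Tendsto S atTop (nhds Sinf)
      ∧ Sinf < (∑ i, x i * β0 i / γ i)⁻¹ := by
  set Q := ∑ i, x i * β0 i / γ i
  have hQ : 0 < Q := Finset.sum_pos (fun i _ => by
    have := hx i; have := hβ0 i; have := hγ i; positivity) Finset.univ_nonempty
  have hSlim := tendsto_iInf_of_hasDerivAt_nonpos hS (fun t => by
    rw [neg_mul, neg_nonpos]
    exact mul_nonneg (Finset.sum_nonneg fun i _ => mul_nonneg (hβnn i t) (hInn i t)) (hSnn t))
    hSnn
  refine ⟨_, hSlim, lt_of_not_ge fun hge => ?_⟩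
  have hSge : ∀ t, Q⁻¹ ≤ S t := fun t => hge.trans (ciInf_le ⟨0, by
    rintro _ ⟨s, rfl⟩; exact hSnn s⟩ t)
  set c : Fin N → ℝ := fun i => Q⁻¹ * β0 i / γ i
  have hc : ∑ i, c i * x i = 1 := by
    rw [← inv_mul_cancel₀ hQ.ne', Finset.mul_sum]
    exact Finset.sum_congr rfl fun i _ => by ring
  have hL_mono := SEIR.monotoneOn_weighted_infected (fun i => (hγ i).ne') (fun i => (hβ0 i).le)
    hc hfin hE hI hInn fun t _ => hSge t
  have hL_int : IntegrableOn (fun t => E t + ∑ i, c i * I i t) (Ioi tF) :=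
    (SEIR.integrableOn_Ioi_exposed hσ hS hE hSnn hEnn tF).add <| integrable_finsetSum _ fun i _ =>
      (SEIR.integrableOn_Ioi_infectious hS hE hI hSnn hEnn hInn (hx i) (hγ i) tF).const_mul (c i)
  have hc_pos : ∀ i, 0 < c i := fun i => by
    have := hβ0 i; have := hγ i; positivity
  exact not_integrableOn_Ioi_of_pos_le (add_sum_mul_pos hc_pos (hEnn tF) (hInn · tF) hpos)
    (fun t ht => hL_mono self_mem_Ici (mem_Ici.2 ht.le) ht.le) hL_int

/-- Fundamental Principle of Finite Strategies: for any finite control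
strategy (time-dependent transmission rates `βᵢ(t)` that equal their natural values
`βᵢ⁰` for all `t ≥ t_F`), if the epidemic is not extinct at time `t_F`, then `S(t)`
converges as `t → ∞` to a limit `S_∞ < S*₀ = (Σᵢ xᵢ βᵢ⁰/γᵢ)⁻¹`. -/
theorem stmt_7
    (N : ℕ) [NeZero N]
    (σ : ℝ) (hσ : 0 < σ)
    (γ x : Fin N → ℝ)
    (hγ : ∀ i, 0 < γ i) (hx : ∀ i, 0 < x i)
    (hxsum : ∑ i, x i = 1)
    (β : Fin N → ℝ → ℝ) (β0 : Fin N → ℝ) (tF : ℝ)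
    (hβcont : ∀ i, Continuous (β i))
    (hβnn : ∀ i t, 0 ≤ β i t)
    (hβ0 : ∀ i, 0 < β0 i)
    (hfin : ∀ i, ∀ t ≥ tF, β i t = β0 i)
    (S E : ℝ → ℝ) (I : Fin N → ℝ → ℝ)
    (hS : ∀ t, HasDerivAt S (-(∑ i, β i t * I i t) * S t) t)
    (hE : ∀ t, HasDerivAt E ((∑ i, β i t * I i t) * S t - σ * E t) t)
    (hI : ∀ i, ∀ t, HasDerivAt (I i) (x i * σ * E t - γ i * I i t) t)
    (hSnn : ∀ t, 0 ≤ S t) (hEnn : ∀ t, 0 ≤ E t)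
    (hInn : ∀ i t, 0 ≤ I i t)
    (hpos : 0 < E tF + ∑ i, I i tF) :
    ∃ Sinf : ℝ, Tendsto S atTop (nhds Sinf)
      ∧ Sinf < (∑ i, x i * β0 i / γ i)⁻¹ :=
  stmt_7_general N σ hσ γ x hγ hx β β0 tF hβnn hβ0 hfin S E I hS hE hI hSnn hEnn hInn hpos
end

section
/- Let R_1, …, R_N : ℝ → ℝ be differentiable positive functions and suppose S, E, I_1, …, I_N : ℝ → ℝ are differentiable and satisfy the time-dependent SEIR system at time t. Then the function U(t) = E(t) + Σ_{i=1}^N (R_i(t)/Σ_{j=1}^N x_j R_j(t)) I_i(t) is differentiable at t with U'(t) = (S(t) − S*(t)) Σ_{i=1}^N γ_i R_i(t) I_i(t) + Σ_{i=1}^N (d/dt)(R_i(t)/Σ_{j=1}^N x_j R_j(t)) I_i(t), where S*(t) = (Σ_{j=1}^N x_j R_j(t))^{-1}. -/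
/-! Since `Σᵢ xᵢ Rᵢ / Σⱼ xⱼ Rⱼ = 1`, the inflow `xᵢ σ E` into the `Iᵢ`, weighted by `Rᵢ / Σⱼ xⱼ Rⱼ`,
cancels the outflow `σ E` of `E`, and the weighted recoveries `γᵢ Iᵢ` produce the `−S*` term;
what remains is the incidence from `E'` and the time derivatives of the weights. -/

open Finset

theorem sum_div_weightedSum_mul_sub {ι : Type*} [Fintype ι] (x γ r I : ι → ℝ) (a : ℝ)
    (hD : ∑ j, x j * r j ≠ 0) :
    ∑ i, r i / (∑ j, x j * r j) * (x i * a - γ i * I i)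
      = a - (∑ j, x j * r j)⁻¹ * ∑ i, γ i * r i * I i := by
  have hsplit : ∀ i, r i / (∑ j, x j * r j) * (x i * a - γ i * I i)
      = (∑ j, x j * r j)⁻¹ * (x i * r i) * a - (∑ j, x j * r j)⁻¹ * (γ i * r i * I i) :=
    fun i => by ring
  simp only [hsplit, sum_sub_distrib, ← sum_mul, ← mul_sum, inv_mul_cancel₀ hD, one_mul]

theorem stmt_13_general
    (N : ℕ) [NeZero N]
    (σ : ℝ)
    (γ x : Fin N → ℝ)
    (hx : ∀ i, 0 < x i)
    (R : Fin N → ℝ → ℝ)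
    (hRdiff : ∀ i, Differentiable ℝ (R i))
    (hRpos : ∀ i t, 0 < R i t)
    (S E : ℝ → ℝ) (I : Fin N → ℝ → ℝ) (t : ℝ)
    (hE : HasDerivAt E ((∑ i, γ i * R i t * I i t) * S t - σ * E t) t)
    (hI : ∀ i, HasDerivAt (I i) (x i * σ * E t - γ i * I i t) t) :
    HasDerivAt (fun s => E s + ∑ i, R i s / (∑ j, x j * R j s) * I i s)
      ((S t - (∑ j, x j * R j t)⁻¹) * (∑ i, γ i * R i t * I i t)
        + ∑ i, deriv (fun s => R i s / (∑ j, x j * R j s)) t * I i t) t := by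
  have hD : ∑ j, x j * R j t ≠ 0 :=
    (sum_pos (fun j _ => mul_pos (hx j) (hRpos j t)) univ_nonempty).ne'
  have hratio : ∀ i, DifferentiableAt ℝ (fun s => R i s / ∑ j, x j * R j s) t := fun i =>
    (hRdiff i t).div (DifferentiableAt.fun_sum fun j _ => (hRdiff j t).const_mul (x j)) hD
  have hweights := sum_div_weightedSum_mul_sub x γ (fun i => R i t) (fun i => I i t) (σ * E t) hD
  simp only [← mul_assoc] at hweights
  refine (hE.add (HasDerivAt.fun_sum fun i _ => (hratio i).hasDerivAt.mul (hI i))).congr_deriv ?_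
  rw [sum_add_distrib, hweights]
  ring

/-- derivative of the function
`U = E + Σᵢ (Rᵢ/Σⱼ xⱼRⱼ) Iᵢ` along solutions of the time-dependent SEIR system
with differentiable positive basic reproduction numbers `Rᵢ(t)`. -/
theorem stmt_13
    (N : ℕ) [NeZero N]
    (σ : ℝ) (hσ : 0 < σ)
    (γ x : Fin N → ℝ)
    (hγ : ∀ i, 0 < γ i) (hx : ∀ i, 0 < x i)
    (hxsum : ∑ i, x i = 1)
    (R : Fin N → ℝ → ℝ)
    (hRdiff : ∀ i, Differentiable ℝ (R i))
    (hRpos : ∀ i t, 0 < R i t)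
    (S E : ℝ → ℝ) (I : Fin N → ℝ → ℝ) (t : ℝ)
    (hS : HasDerivAt S (-(∑ i, γ i * R i t * I i t) * S t) t)
    (hE : HasDerivAt E ((∑ i, γ i * R i t * I i t) * S t - σ * E t) t)
    (hI : ∀ i, HasDerivAt (I i) (x i * σ * E t - γ i * I i t) t) :
    HasDerivAt (fun s => E s + ∑ i, R i s / (∑ j, x j * R j s) * I i s)
      ((S t - (∑ j, x j * R j t)⁻¹) * (∑ i, γ i * R i t * I i t)
        + ∑ i, deriv (fun s => R i s / (∑ j, x j * R j s)) t * I i t) t :=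
  stmt_13_general N σ γ x hx R hRdiff hRpos S E I t hE hI
end

section
/- (Uniform strategies and weak outbreak.) Let R_1⁰, …, R_N⁰ > 0 and let q : ℝ → ℝ be a positive function; set R_i(t) = q(t) R_i⁰ (a uniform strategy). Suppose S, E, I_1, …, I_N : ℝ → ℝ are differentiable, satisfy the time-dependent SEIR system with these R_i(t) for all t ≥ t_I, and I_i(t) ≥ 0 for all t ≥ t_I. Then the function U(t) = E(t) + Σ_i (R_i⁰/Σ_j x_j R_j⁰) I_i(t) satisfies U'(t) = (S(t) − S*(t)) q(t) Σ_i γ_i R_i⁰ I_i(t) for all t ≥ t_I, where S*(t) = (q(t) Σ_j x_j R_j⁰)^{-1}. Consequently, if S(t) ≤ S*(t) for all t > t_I (a uniform weak outbreak strategy), then U'(t) ≤ 0 for all t > t_I and U is non-increasing on (t_I, ∞). -/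
/-! With weights `Rᵢ⁰ / Σⱼ xⱼRⱼ⁰`, the inflow `xᵢσE` into the infectious classes exactly
compensates the outflow `σE` of `E`, since the weights average to one against `x`. What is left of
`U'` is the new-infection term `S · q Σᵢ γᵢRᵢ⁰Iᵢ` minus the weighted recoveries
`Σᵢ γᵢRᵢ⁰Iᵢ / Σⱼ xⱼRⱼ⁰ = S* · q Σᵢ γᵢRᵢ⁰Iᵢ`. -/

open Finset Set

section Lyapunov

variable {ι : Type*} [Fintype ι] {σ c : ℝ} {γ x R0 : ι → ℝ}

theorem seir_lyapunov_deriv_eq (hc : c ≠ 0) (hxR0 : ∑ j, x j * R0 j ≠ 0) (s e : ℝ) (J : ι → ℝ) :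
    (∑ i, γ i * (c * R0 i) * J i) * s - σ * e
        + ∑ i, R0 i / (∑ j, x j * R0 j) * (x i * σ * e - γ i * J i)
      = (s - (c * ∑ j, x j * R0 j)⁻¹) * c * ∑ i, γ i * R0 i * J i := by
  have h_infection : ∑ i, γ i * (c * R0 i) * J i = c * ∑ i, γ i * R0 i * J i := by
    rw [mul_sum]; exact sum_congr rfl fun i _ => by ring
  have h_weighted : ∑ i, R0 i / (∑ j, x j * R0 j) * (x i * σ * e - γ i * J i)
      = ((∑ j, x j * R0 j) * (σ * e) - ∑ i, γ i * R0 i * J i) / ∑ j, x j * R0 j := by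
    rw [sum_mul, ← sum_sub_distrib, sum_div]
    exact sum_congr rfl fun i _ => by ring
  rw [h_infection, h_weighted]
  field_simp
  ring

theorem hasDerivAt_seir_lyapunov {S E : ℝ → ℝ} {I : ι → ℝ → ℝ} {t : ℝ}
    (hc : c ≠ 0) (hxR0 : ∑ j, x j * R0 j ≠ 0)
    (hE : HasDerivAt E ((∑ i, γ i * (c * R0 i) * I i t) * S t - σ * E t) t)
    (hI : ∀ i, HasDerivAt (I i) (x i * σ * E t - γ i * I i t) t) :
    HasDerivAt (fun s => E s + ∑ i, R0 i / (∑ j, x j * R0 j) * I i s)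
      ((S t - (c * ∑ j, x j * R0 j)⁻¹) * c * ∑ i, γ i * R0 i * I i t) t := by
  rw [← seir_lyapunov_deriv_eq hc hxR0]
  exact hE.fun_add (HasDerivAt.fun_sum fun i _ => (hI i).const_mul _)

end Lyapunov

theorem antitoneOn_Ioi_of_deriv_nonpos {f : ℝ → ℝ} {a : ℝ}
    (hf : ∀ t > a, DifferentiableAt ℝ f t) (hf' : ∀ t > a, deriv f t ≤ 0) :
    AntitoneOn f (Ioi a) := by
  refine antitoneOn_of_deriv_nonpos (convex_Ioi a)
    (fun t ht => (hf t ht).continuousAt.continuousWithinAt) ?_ ?_ <;> rw [interior_Ioi]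
  · exact fun t ht => (hf t ht).differentiableWithinAt
  · exact hf'

theorem stmt_14_general
    (N : ℕ) [NeZero N]
    (σ : ℝ)
    (γ x : Fin N → ℝ)
    (hγ : ∀ i, 0 < γ i) (hx : ∀ i, 0 < x i)
    (R0 : Fin N → ℝ) (hR0 : ∀ i, 0 < R0 i)
    (q : ℝ → ℝ) (hq : ∀ t, 0 < q t)
    (tI : ℝ)
    (S E : ℝ → ℝ) (I : Fin N → ℝ → ℝ)
    (hE : ∀ t ≥ tI, HasDerivAt E ((∑ i, γ i * (q t * R0 i) * I i t) * S t - σ * E t) t)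
    (hI : ∀ i, ∀ t ≥ tI, HasDerivAt (I i) (x i * σ * E t - γ i * I i t) t)
    (hInn : ∀ i, ∀ t ≥ tI, 0 ≤ I i t) :
    (∀ t ≥ tI, HasDerivAt (fun s => E s + ∑ i, R0 i / (∑ j, x j * R0 j) * I i s)
      ((S t - (q t * ∑ j, x j * R0 j)⁻¹) * q t * ∑ i, γ i * R0 i * I i t) t) ∧
    ((∀ t > tI, S t ≤ (q t * ∑ j, x j * R0 j)⁻¹) →
      (∀ t > tI, deriv (fun s => E s + ∑ i, R0 i / (∑ j, x j * R0 j) * I i s) t ≤ 0) ∧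
      AntitoneOn (fun s => E s + ∑ i, R0 i / (∑ j, x j * R0 j) * I i s)
        (Set.Ioi tI)) := by
  have hxR0 : 0 < ∑ j, x j * R0 j :=
    sum_pos (fun j _ => mul_pos (hx j) (hR0 j)) univ_nonempty
  have hU : ∀ t ≥ tI, HasDerivAt (fun s => E s + ∑ i, R0 i / (∑ j, x j * R0 j) * I i s)
      ((S t - (q t * ∑ j, x j * R0 j)⁻¹) * q t * ∑ i, γ i * R0 i * I i t) t :=
    fun t ht => hasDerivAt_seir_lyapunov (hq t).ne' hxR0.ne' (hE t ht) fun i => hI i t ht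
  refine ⟨hU, fun hweak => ?_⟩
  have hU' : ∀ t > tI, deriv (fun s => E s + ∑ i, R0 i / (∑ j, x j * R0 j) * I i s) t ≤ 0 := by
    intro t ht
    rw [(hU t ht.le).deriv]
    have hrecovery : 0 ≤ ∑ i, γ i * R0 i * I i t :=
      sum_nonneg fun i _ => mul_nonneg (mul_pos (hγ i) (hR0 i)).le (hInn i t ht.le)
    exact mul_nonpos_of_nonpos_of_nonneg
      (mul_nonpos_of_nonpos_of_nonneg (sub_nonpos.2 (hweak t ht)) (hq t).le) hrecovery
  exact ⟨hU', antitoneOn_Ioi_of_deriv_nonpos (fun t ht => (hU t ht.le).differentiableAt) hU'⟩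

/-- Uniform strategies and weak outbreak: under a uniform strategy
`Rᵢ(t) = q(t) Rᵢ⁰`, the function `U = E + Σᵢ (Rᵢ⁰/Σⱼ xⱼRⱼ⁰) Iᵢ` satisfies
`U'(t) = (S(t) − S*(t)) q(t) Σᵢ γᵢ Rᵢ⁰ Iᵢ(t)` with `S*(t) = (q(t) Σⱼ xⱼRⱼ⁰)⁻¹`;
consequently any uniform weak outbreak strategy (`S(t) ≤ S*(t)` for `t > t_I`)
gives `U' ≤ 0` after `t_I` and `U` non-increasing on `(t_I, ∞)`. -/
theorem stmt_14
    (N : ℕ) [NeZero N]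
    (σ : ℝ) (hσ : 0 < σ)
    (γ x : Fin N → ℝ)
    (hγ : ∀ i, 0 < γ i) (hx : ∀ i, 0 < x i)
    (hxsum : ∑ i, x i = 1)
    (R0 : Fin N → ℝ) (hR0 : ∀ i, 0 < R0 i)
    (q : ℝ → ℝ) (hq : ∀ t, 0 < q t)
    (tI : ℝ)
    (S E : ℝ → ℝ) (I : Fin N → ℝ → ℝ)
    (hS : ∀ t ≥ tI, HasDerivAt S (-(∑ i, γ i * (q t * R0 i) * I i t) * S t) t)
    (hE : ∀ t ≥ tI, HasDerivAt E ((∑ i, γ i * (q t * R0 i) * I i t) * S t - σ * E t) t)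
    (hI : ∀ i, ∀ t ≥ tI, HasDerivAt (I i) (x i * σ * E t - γ i * I i t) t)
    (hInn : ∀ i, ∀ t ≥ tI, 0 ≤ I i t) :
    (∀ t ≥ tI, HasDerivAt (fun s => E s + ∑ i, R0 i / (∑ j, x j * R0 j) * I i s)
      ((S t - (q t * ∑ j, x j * R0 j)⁻¹) * q t * ∑ i, γ i * R0 i * I i t) t) ∧
    ((∀ t > tI, S t ≤ (q t * ∑ j, x j * R0 j)⁻¹) →
      (∀ t > tI, deriv (fun s => E s + ∑ i, R0 i / (∑ j, x j * R0 j) * I i s) t ≤ 0) ∧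
      AntitoneOn (fun s => E s + ∑ i, R0 i / (∑ j, x j * R0 j) * I i s)
        (Set.Ioi tI)) :=
  stmt_14_general N σ γ x hγ hx R0 hR0 q hq tI S E I hE hI hInn
end

section
/- (The S*₀-regulated strategy is a weak outbreak strategy.) Let R_1⁰, …, R_N⁰ > 0 and S*₀ = (Σ_i x_i R_i⁰)^{-1}. Let t_I ∈ ℝ, Δ > 0, and set t_k = t_I + kΔ for k = 0, 1, 2, …. Suppose q : ℝ → ℝ and differentiable nonnegative functions S, E, I_1, …, I_N : ℝ → ℝ together satisfy: (i) q(t) = 1 for t ≤ t_I and, for each k and each t ∈ [t_k, t_{k+1}), q(t) = S*₀/S(t_k) if S(t_k) > S*₀ and q(t) = 1 otherwise; and (ii) the time-dependent SEIR system with R_i(t) = q(t) R_i⁰ holds for all t. Then S(t) ≤ S*(t) = S*₀/q(t) for all t ≥ t_I; that is, the S*₀-strategy is a weak outbreak strategy. -/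
/-- the `S*₀`-regulated strategy — which, at the start of each period
of length `Δ`, sets the reduction factor `q` to `S*₀/S(current time)` whenever the
current susceptible fraction exceeds `S*₀`, and to `1` otherwise — is a weak
outbreak strategy: `S(t) ≤ S*(t) = S*₀/q(t)` for all `t ≥ t_I`. -/
theorem stmt_17
    (N : ℕ) [NeZero N]
    (σ : ℝ) (hσ : 0 < σ)
    (γ x : Fin N → ℝ)
    (hγ : ∀ i, 0 < γ i) (hx : ∀ i, 0 < x i)
    (hxsum : ∑ i, x i = 1)
    (R0 : Fin N → ℝ) (hR0 : ∀ i, 0 < R0 i)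
    (Sstar0 : ℝ) (hSstar0 : Sstar0 = (∑ i, x i * R0 i)⁻¹)
    (tI Δ : ℝ) (hΔ : 0 < Δ)
    (q S E : ℝ → ℝ)
    (hq1 : ∀ t ≤ tI, q t = 1)
    (hqk : ∀ k : ℕ, ∀ t, tI + k * Δ ≤ t → t < tI + (k + 1) * Δ →
      q t = if Sstar0 < S (tI + k * Δ) then Sstar0 / S (tI + k * Δ) else 1)
    (I : Fin N → ℝ → ℝ)
    (hS : ∀ t, HasDerivAt S (-(∑ i, γ i * (q t * R0 i) * I i t) * S t) t)
    (hE : ∀ t, HasDerivAt E ((∑ i, γ i * (q t * R0 i) * I i t) * S t - σ * E t) t)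
    (hI : ∀ i t, HasDerivAt (I i) (x i * σ * E t - γ i * I i t) t)
    (hSnn : ∀ t, 0 ≤ S t) (hEnn : ∀ t, 0 ≤ E t) (hInn : ∀ i t, 0 ≤ I i t) :
    ∀ t ≥ tI, S t ≤ Sstar0 / q t := by
  have hSstar_pos : 0 < Sstar0 := by
    rw [hSstar0]
    exact inv_pos.mpr (Finset.sum_pos (fun i _ => mul_pos (hx i) (hR0 i)) Finset.univ_nonempty)
  have hk : ∀ t, tI ≤ t → ∃ k : ℕ, tI + k * Δ ≤ t ∧ t < tI + (k + 1) * Δ := by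
    intro t ht
    refine ⟨⌊(t - tI) / Δ⌋₊, ?_, ?_⟩
    · have h0 : (0:ℝ) ≤ (t - tI) / Δ := div_nonneg (by linarith) hΔ.le
      have h1 : (⌊(t - tI) / Δ⌋₊ : ℝ) ≤ (t - tI) / Δ := Nat.floor_le h0
      have h2 : (⌊(t - tI) / Δ⌋₊ : ℝ) * Δ ≤ t - tI := by
        rw [← le_div_iff₀ hΔ]; exact h1
      linarith
    · have h1 := Nat.lt_floor_add_one ((t - tI) / Δ)
      have h2 : t - tI < ((⌊(t - tI) / Δ⌋₊ : ℝ) + 1) * Δ := by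
        rw [← div_lt_iff₀ hΔ]; exact_mod_cast h1
      linarith
  have hq_nonneg : ∀ t, 0 ≤ q t := by
    intro t
    rcases le_or_gt t tI with h | h
    · rw [hq1 t h]; norm_num
    · obtain ⟨k, h1, h2⟩ := hk t h.le
      rw [hqk k t h1 h2]
      split_ifs with hc
      · exact div_nonneg hSstar_pos.le (hSnn _)
      · norm_num
  have hanti : Antitone S := by
    have hdiff : Differentiable ℝ S := fun t => (hS t).differentiableAt
    apply antitone_of_deriv_nonpos hdiff
    intro t
    rw [(hS t).deriv]
    have hsum : 0 ≤ ∑ i, γ i * (q t * R0 i) * I i t :=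
      Finset.sum_nonneg fun i _ =>
        mul_nonneg (mul_nonneg (hγ i).le (mul_nonneg (hq_nonneg t) (hR0 i).le)) (hInn i t)
    nlinarith [hSnn t]
  intro t ht
  obtain ⟨k, h1, h2⟩ := hk t ht
  have hStk : S t ≤ S (tI + k * Δ) := hanti h1
  rw [hqk k t h1 h2]
  split_ifs with hc
  · have hSk : 0 < S (tI + k * Δ) := lt_trans hSstar_pos hc
    have : Sstar0 / (Sstar0 / S (tI + k * Δ)) = S (tI + k * Δ) := by
      field_simp
    rw [this]; exact hStk
  · simpa using hStk.trans (not_lt.mp hc)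
end

section
/- (Entrywise monotonicity of the matrix exponential for Metzler matrices.) Let A and B be n×n real matrices such that A has nonnegative off-diagonal entries (A is Metzler) and A_{ij} ≤ B_{ij} for all i, j. Then exp(A) and exp(B) have nonnegative entries and exp(A)_{ij} ≤ exp(B)_{ij} for all i, j; in particular the maximum norm satisfies max_{i,j} |exp(A)_{ij}| ≤ max_{i,j} |exp(B)_{ij}|. -/
/-! Since `exp (A + c • 1) = e^c • exp A`, shifting the diagonal by a large `c` reduces the
claim to entrywise nonnegative matrices, where both nonnegativity and monotonicity hold term
by term in the power series of `exp`. -/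

open NormedSpace

namespace Matrix

variable {ι α : Type*} [Fintype ι] [DecidableEq ι]

def IsMetzler [Zero α] [LE α] (A : Matrix ι ι α) : Prop :=
  ∀ i j, i ≠ j → 0 ≤ A i j

lemma pow_apply_mono [Semiring α] [PartialOrder α] [IsOrderedRing α] {A B : Matrix ι ι α}
    (hA : ∀ i j, 0 ≤ A i j) (hAB : ∀ i j, A i j ≤ B i j) (k : ℕ) (i j : ι) :
    (A ^ k) i j ≤ (B ^ k) i j := by
  induction k generalizing i j with
  | zero => rfl
  | succ k ih =>
    rw [pow_succ, pow_succ, mul_apply, mul_apply]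
    exact Finset.sum_le_sum fun l _ =>
      mul_le_mul (ih i l) (hAB l j) (hA l j) ((pow_apply_nonneg hA k i l).trans (ih i l))

section Exponential

attribute [local instance] Matrix.linftyOpNormedRing Matrix.linftyOpNormedAlgebra

lemma hasSum_exp_apply (A : Matrix ι ι ℝ) (i j : ι) :
    HasSum (fun k : ℕ => (k.factorial : ℝ)⁻¹ * (A ^ k) i j) (exp A i j) :=
  Pi.hasSum.mp (Pi.hasSum.mp (exp_series_hasSum_exp' (𝕂 := ℝ) A) i) j

lemma exp_add_smul_one (A : Matrix ι ι ℝ) (c : ℝ) :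
    exp (A + c • 1) = Real.exp c • exp A := by
  have hc : exp (algebraMap ℝ (Matrix ι ι ℝ) c) = algebraMap ℝ _ (Real.exp c) := by
    rw [Real.exp_eq_exp_ℝ]; exact (algebraMap_exp_comm c).symm
  rw [← Algebra.algebraMap_eq_smul_one, exp_add_of_commute _ _ (Algebra.commutes c A).symm, hc,
    ← Algebra.commutes, Algebra.smul_def]

end Exponential

lemma exp_apply_nonneg {A : Matrix ι ι ℝ} (hA : ∀ i j, 0 ≤ A i j) (i j : ι) :
    0 ≤ exp A i j :=
  hasSum_le (fun k => mul_nonneg (by positivity) (pow_apply_nonneg hA k i j)) hasSum_zero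
    (hasSum_exp_apply A i j)

lemma exp_apply_mono {A B : Matrix ι ι ℝ} (hA : ∀ i j, 0 ≤ A i j)
    (hAB : ∀ i j, A i j ≤ B i j) (i j : ι) : exp A i j ≤ exp B i j :=
  hasSum_le (fun k => mul_le_mul_of_nonneg_left (pow_apply_mono hA hAB k i j) (by positivity))
    (hasSum_exp_apply A i j) (hasSum_exp_apply B i j)

lemma IsMetzler.exists_add_smul_one_nonneg {A : Matrix ι ι ℝ} (hA : A.IsMetzler) :
    ∃ c : ℝ, ∀ i j, 0 ≤ (A + c • 1) i j := by
  refine ⟨∑ i, |A i i|, fun i j => ?_⟩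
  rcases eq_or_ne i j with rfl | hij
  · have : |A i i| ≤ ∑ k, |A k k| :=
      Finset.single_le_sum (f := fun k => |A k k|) (fun _ _ => abs_nonneg _) (Finset.mem_univ i)
    simp only [add_apply, smul_apply, one_apply_eq, smul_eq_mul, mul_one]
    linarith [neg_abs_le (A i i)]
  · simpa [one_apply_ne hij] using hA i j hij

theorem IsMetzler.exp_apply_nonneg {A : Matrix ι ι ℝ} (hA : A.IsMetzler) (i j : ι) :
    0 ≤ exp A i j := by
  obtain ⟨c, hc⟩ := hA.exists_add_smul_one_nonneg
  have h := Matrix.exp_apply_nonneg hc i j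
  rw [exp_add_smul_one, smul_apply, smul_eq_mul] at h
  exact nonneg_of_mul_nonneg_right h (Real.exp_pos c)

theorem IsMetzler.exp_apply_mono {A B : Matrix ι ι ℝ} (hA : A.IsMetzler)
    (hAB : ∀ i j, A i j ≤ B i j) (i j : ι) : exp A i j ≤ exp B i j := by
  obtain ⟨c, hc⟩ := hA.exists_add_smul_one_nonneg
  have h := Matrix.exp_apply_mono (B := B + c • 1) hc (fun i j => by simpa using hAB i j) i j
  simp only [exp_add_smul_one, smul_apply, smul_eq_mul] at h
  exact le_of_mul_le_mul_left h (Real.exp_pos c)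

end Matrix

theorem stmt_18_general
    (n : ℕ)
    (A B : Matrix (Fin n) (Fin n) ℝ)
    (hMetzler : ∀ i j, i ≠ j → 0 ≤ A i j)
    (hAB : ∀ i j, A i j ≤ B i j) :
    (∀ i j, 0 ≤ exp A i j) ∧
    (∀ i j, exp A i j ≤ exp B i j) ∧
    (⨆ i, ⨆ j, |exp A i j|) ≤ ⨆ i, ⨆ j, |exp B i j| := by
  have hA : A.IsMetzler := hMetzler
  have habs (i j : Fin n) : |exp A i j| ≤ |exp B i j| := by
    have hle := hA.exp_apply_mono hAB i j
    have h0 := hA.exp_apply_nonneg i j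
    rwa [abs_of_nonneg h0, abs_of_nonneg (h0.trans hle)]
  refine ⟨hA.exp_apply_nonneg, hA.exp_apply_mono hAB, ?_⟩
  exact ciSup_mono (Set.finite_range _).bddAbove fun i =>
    ciSup_mono (Set.finite_range _).bddAbove (habs i)

/-- Entrywise monotonicity of the matrix exponential for Metzler
matrices: if `A` is Metzler (nonnegative off-diagonal entries) and `A ≤ B`
entrywise, then `exp A` and `exp B` are entrywise nonnegative, `exp A ≤ exp B`
entrywise, and consequently the maximum norms compare. -/
theorem stmt_18
    (n : ℕ) [NeZero n]
    (A B : Matrix (Fin n) (Fin n) ℝ)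
    (hMetzler : ∀ i j, i ≠ j → 0 ≤ A i j)
    (hAB : ∀ i j, A i j ≤ B i j) :
    (∀ i j, 0 ≤ exp A i j) ∧
    (∀ i j, exp A i j ≤ exp B i j) ∧
    (⨆ i, ⨆ j, |exp A i j|) ≤ ⨆ i, ⨆ j, |exp B i j| :=
  stmt_18_general n A B hMetzler hAB
end
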